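/- Suppose (q,t,ε) is a good triple. Then for every integer 2 ≤ t′ ≤ t, the open interval I_{t′} = ( t′/2 − (1−2ε)t′/(2q), t′/2 + 1 − (1+2ε)t′/(2q) ) contains exactly one integer s_{t′}; furthermore s_{t′} = ⌈t′/2⌉ when t′ ≤ q, and s_{t′} = ⌊t′/2⌋ when t′ > q. -/

import Mathlib

/-- `(q,t,ε)` is a good triple. -/
def GoodTriple (q t : ℕ) (ε : ℝ) : Prop :=
  ∀ t' : ℕ, 2 ≤ t' → t' ≤ t →
    ∃ s : ℕ, 1 ≤ s ∧ s ≤ t' ∧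
      (t' : ℝ) / 2 - (1 - 2 * ε) * (t' : ℝ) / (2 * (q : ℝ)) < (s : ℝ) ∧
      (s : ℝ) < (t' : ℝ) / 2 + 1 - (1 + 2 * ε) * (t' : ℝ) / (2 * (q : ℝ))

/-!
Any `s ∈ I_{t'}` has `2s` in `(t' - (1-2ε)t'/q, t' + 2 - (1+2ε)t'/q)`. For `t' ≤ q` this window sits
inside `(t' - 1, t' + 2)`, whose only integers are `t'` and `t' + 1`, so `s = ⌈t'/2⌉`; for
`q < t' < 2q` it sits inside `(t' - 2, t' + 1)`, so `s = ⌊t'/2⌋`. The case `t' ≥ 2q` never occurs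
in a good triple, since `I_{2q} = (q - 1 + 2ε, q - 2ε)` contains no integer.
-/

def MemGoodInterval (q ε t' x : ℝ) : Prop :=
  t' / 2 - (1 - 2 * ε) * t' / (2 * q) < x ∧ x < t' / 2 + 1 - (1 + 2 * ε) * t' / (2 * q)

namespace MemGoodInterval

variable {q ε t' x : ℝ}

lemma two_mul_mem_Ioo_of_le (hq : 0 < q) (hε : 0 ≤ ε) (ht' : 0 ≤ t') (htq : t' ≤ q)
    (hx : MemGoodInterval q ε t' x) : t' - 1 < 2 * x ∧ 2 * x < t' + 2 := by
  have hlow : (1 - 2 * ε) * t' / (2 * q) ≤ 1 / 2 := by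
    rw [div_le_iff₀ (by positivity)]
    nlinarith [mul_nonneg hε ht']
  have hupp : 0 ≤ (1 + 2 * ε) * t' / (2 * q) := by positivity
  constructor <;> linarith [hx.1, hx.2]

lemma two_mul_mem_Ioo_of_lt (hε : 0 ≤ ε) (hqt : q < t') (ht2q : t' < 2 * q)
    (hx : MemGoodInterval q ε t' x) : t' - 2 < 2 * x ∧ 2 * x < t' + 1 := by
  have hq : 0 < q := by linarith
  have hεt : 0 ≤ ε * t' := mul_nonneg hε (by linarith)
  have hlow : (1 - 2 * ε) * t' / (2 * q) < 1 := by
    rw [div_lt_iff₀ (by positivity)]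
    nlinarith
  have hupp : 1 / 2 < (1 + 2 * ε) * t' / (2 * q) := by
    rw [lt_div_iff₀ (by positivity)]
    nlinarith
  constructor <;> linarith [hx.1, hx.2]

end MemGoodInterval

section

variable {q t' : ℕ} {ε : ℝ} {s : ℤ}

lemma eq_ceil_half_of_memGoodInterval (hq : 0 < q) (hε : 0 ≤ ε) (htq : t' ≤ q)
    (hs : MemGoodInterval q ε t' s) : s = ((t' + 1) / 2 : ℕ) := by
  obtain ⟨hlow, hupp⟩ :=
    hs.two_mul_mem_Ioo_of_le (by exact_mod_cast hq) hε t'.cast_nonneg (by exact_mod_cast htq)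
  have hlow' : (t' : ℤ) - 1 < 2 * s := by exact_mod_cast hlow
  have hupp' : 2 * s < (t' : ℤ) + 2 := by exact_mod_cast hupp
  omega

lemma eq_floor_half_of_memGoodInterval (hε : 0 ≤ ε) (hqt : q < t') (ht2q : t' < 2 * q)
    (hs : MemGoodInterval q ε t' s) : s = (t' / 2 : ℕ) := by
  obtain ⟨hlow, hupp⟩ :=
    hs.two_mul_mem_Ioo_of_lt hε (by exact_mod_cast hqt) (by exact_mod_cast ht2q)
  have hlow' : (t' : ℤ) - 2 < 2 * s := by exact_mod_cast hlow
  have hupp' : 2 * s < (t' : ℤ) + 1 := by exact_mod_cast hupp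
  omega

end

lemma GoodTriple.lt_two_mul {q t : ℕ} {ε : ℝ} (h : GoodTriple q t ε) (hq : 0 < q)
    (hε : 0 ≤ ε) : t < 2 * q := by
  by_contra! hle
  obtain ⟨s, -, -, hlow, hupp⟩ := h (2 * q) (by omega) hle
  have hq' : (q : ℝ) ≠ 0 := by positivity
  push_cast at hlow hupp
  field_simp at hlow hupp
  have hsq : (s : ℝ) < q := by linarith
  have hqs : (q : ℝ) < s + 1 := by linarith
  have hsq' : s < q := by exact_mod_cast hsq
  have hqs' : q < s + 1 := by exact_mod_cast hqs
  omega

theorem stmt9_general (q t : ℕ) (hq : 2 ≤ q)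
    (ε : ℝ) (hε0 : 0 < ε)
    (hgood : GoodTriple q t ε) :
    ∀ t' : ℕ, 2 ≤ t' → t' ≤ t →
      (∃! s : ℤ, (t' : ℝ) / 2 - (1 - 2 * ε) * (t' : ℝ) / (2 * (q : ℝ)) < (s : ℝ) ∧
        (s : ℝ) < (t' : ℝ) / 2 + 1 - (1 + 2 * ε) * (t' : ℝ) / (2 * (q : ℝ))) ∧
      (∀ s : ℤ, ((t' : ℝ) / 2 - (1 - 2 * ε) * (t' : ℝ) / (2 * (q : ℝ)) < (s : ℝ) ∧
          (s : ℝ) < (t' : ℝ) / 2 + 1 - (1 + 2 * ε) * (t' : ℝ) / (2 * (q : ℝ))) →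
        (t' ≤ q → s = (((t' + 1) / 2 : ℕ) : ℤ)) ∧ (q < t' → s = ((t' / 2 : ℕ) : ℤ))) := by
  have hq0 : 0 < q := by omega
  have ht2q := hgood.lt_two_mul hq0 hε0.le
  intro t' ht' ht't
  have hform : ∀ s : ℤ, MemGoodInterval q ε t' s →
      (t' ≤ q → s = ((t' + 1) / 2 : ℕ)) ∧ (q < t' → s = (t' / 2 : ℕ)) := fun s hs =>
    ⟨fun htq => eq_ceil_half_of_memGoodInterval hq0 hε0.le htq hs,
      fun hqt => eq_floor_half_of_memGoodInterval hε0.le hqt (by omega) hs⟩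
  obtain ⟨s₀, -, -, hs₀⟩ := hgood t' ht' ht't
  have hs₀' : MemGoodInterval q ε t' ((s₀ : ℤ) : ℝ) := by
    rw [Int.cast_natCast]
    exact hs₀
  refine ⟨⟨s₀, hs₀', fun s hs => ?_⟩, hform⟩
  rcases le_or_gt t' q with htq | hqt
  · rw [(hform s hs).1 htq, (hform s₀ hs₀').1 htq]
  · rw [(hform s hs).2 hqt, (hform s₀ hs₀').2 hqt]

theorem stmt9 (q t : ℕ) (hq : 2 ≤ q) (ht : 2 ≤ t)
    (ε : ℝ) (hε0 : 0 < ε) (hε : ε < min ((q : ℝ) / (2 * (t : ℝ))) (1 / 2))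
    (hgood : GoodTriple q t ε) :
    ∀ t' : ℕ, 2 ≤ t' → t' ≤ t →
      (∃! s : ℤ, (t' : ℝ) / 2 - (1 - 2 * ε) * (t' : ℝ) / (2 * (q : ℝ)) < (s : ℝ) ∧
        (s : ℝ) < (t' : ℝ) / 2 + 1 - (1 + 2 * ε) * (t' : ℝ) / (2 * (q : ℝ))) ∧
      (∀ s : ℤ, ((t' : ℝ) / 2 - (1 - 2 * ε) * (t' : ℝ) / (2 * (q : ℝ)) < (s : ℝ) ∧
          (s : ℝ) < (t' : ℝ) / 2 + 1 - (1 + 2 * ε) * (t' : ℝ) / (2 * (q : ℝ))) →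
        (t' ≤ q → s = (((t' + 1) / 2 : ℕ) : ℤ)) ∧ (q < t' → s = ((t' / 2 : ℕ) : ℤ))) :=
  stmt9_general q t hq ε hε0 hgood
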